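/- arXiv:1307.0045 — 8 statements merged into one kernel-verified Lean document; each statement's English description precedes it below -/
import Mathlib

section
/- If G is not a complete graph, then the second-smallest eigenvalue of the graph Laplacian satisfies λ₂ ≤ min over non-edges (i,j) ∉ E of (d_i d_j^{2r} + d_i^{2r} d_j)/(d_i^r d_j^{2r} + d_i^{2r} d_j^r). -/
/-!
Test the variational characterization of `λ₂` with `u = d_b^r δ_a - d_a^r δ_b`, which is
orthogonal to the constants for `⟨·,·⟩_V`. Its Dirichlet energy is
`Σ_i d_i u_i² - Σ_{i,j} ω_ij u_i u_j`, and the cross term vanishes because `a` and `b` are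
distinct, not adjacent and carry no loops; so the energy is `d_a d_b^{2r} + d_b d_a^{2r}`,
while `‖u‖_V² = d_a^r d_b^{2r} + d_b^r d_a^{2r}`.
-/

open Finset

section DirichletEnergy

variable {V : Type*} [Fintype V] (ω : V → V → ℝ) (d : V → ℝ)

theorem sum_sum_mul_sub_sq_eq (hsym : ∀ i j, ω i j = ω j i) (hd : ∀ i, d i = ∑ j, ω i j)
    (u : V → ℝ) :
    ∑ i, ∑ j, ω i j * (u i - u j) ^ 2 = 2 * (∑ i, d i * u i ^ 2 - ∑ i, ∑ j, ω i j * u i * u j) := by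
  have hdeg : ∀ i, d i * u i ^ 2 = ∑ j, ω i j * u i ^ 2 := fun i => by rw [hd i, sum_mul]
  have hdeg' : ∑ i, d i * u i ^ 2 = ∑ i, ∑ j, ω i j * u j ^ 2 := by
    simp only [hdeg]
    rw [sum_comm]
    simp only [hsym]
  calc ∑ i, ∑ j, ω i j * (u i - u j) ^ 2
      = ∑ i, ∑ j, ω i j * u i ^ 2 + ∑ i, ∑ j, ω i j * u j ^ 2
          - 2 * ∑ i, ∑ j, ω i j * u i * u j := by
        simp only [mul_sum, ← sum_add_distrib, ← sum_sub_distrib]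
        exact sum_congr rfl fun i _ => sum_congr rfl fun j _ => by ring
    _ = _ := by rw [← hdeg', ← sum_congr rfl fun i _ => hdeg i]; ring

theorem sum_sum_mul_mul_eq_zero_of_nonadjacent (hsym : ∀ i j, ω i j = ω j i)
    (hdiag : ∀ i, ω i i = 0) {a b : V} (hab : a ≠ b) (hωab : ω a b = 0) {u : V → ℝ}
    (hu : ∀ i, i ≠ a ∧ i ≠ b → u i = 0) :
    ∑ i, ∑ j, ω i j * u i * u j = 0 := by
  have hrow : ∀ i, ∑ j, ω i j * u i * u j = ω i a * u i * u a + ω i b * u i * u b :=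
    fun i => Fintype.sum_eq_add a b hab fun j hj => by rw [hu j hj, mul_zero]
  rw [Fintype.sum_eq_add a b hab fun i hi => by
    simp only [hu i hi, mul_zero, zero_mul, sum_const_zero]]
  simp only [hrow, hdiag, hωab, hsym b a]
  ring

theorem dirichlet_energy_of_nonadjacent (hsym : ∀ i j, ω i j = ω j i) (hdiag : ∀ i, ω i i = 0)
    (hd : ∀ i, d i = ∑ j, ω i j) {a b : V} (hab : a ≠ b) (hωab : ω a b = 0) {u : V → ℝ}
    (hu : ∀ i, i ≠ a ∧ i ≠ b → u i = 0) :
    (1 / 2) * ∑ i, ∑ j, ω i j * (u i - u j) ^ 2 = d a * u a ^ 2 + d b * u b ^ 2 := by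
  rw [sum_sum_mul_sub_sq_eq ω d hsym hd, sum_sum_mul_mul_eq_zero_of_nonadjacent ω hsym hdiag hab
    hωab hu, Fintype.sum_eq_add a b hab fun i hi => by rw [hu i hi]; ring]
  ring

end DirichletEnergy

theorem stmt_2_general {V : Type*} [Fintype V]
    (ω : V → V → ℝ) (hsym : ∀ i j, ω i j = ω j i)
    (hdiag : ∀ i, ω i i = 0)
    (d : V → ℝ) (hd : ∀ i, d i = ∑ j, ω i j) (hdpos : ∀ i, 0 < d i)
    (r : ℝ)
    (lam2 : ℝ)
    (hvar : ∀ u : V → ℝ, (∑ i, d i ^ r * u i) = 0 →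
      lam2 * (∑ i, d i ^ r * u i ^ 2) ≤ (1/2) * ∑ i, ∑ j, ω i j * (u i - u j) ^ 2) :
    ∀ a b : V, a ≠ b → ω a b = 0 →
      lam2 ≤ (d a * d b ^ (2 * r) + d a ^ (2 * r) * d b) /
             (d a ^ r * d b ^ (2 * r) + d a ^ (2 * r) * d b ^ r) := by
  classical
  intro a b hab hωab
  set u : V → ℝ := Pi.single a (d b ^ r) + Pi.single b (-d a ^ r)
  have hu : ∀ i, i ≠ a ∧ i ≠ b → u i = 0 := fun i hi => by simp [u, hi.1, hi.2]
  have hua : u a = d b ^ r := by simp [u, hab.symm]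
  have hub : u b = -d a ^ r := by simp [u, hab]
  have hsum (f : V → ℝ) : ∑ i, f i * u i ^ 2 = f a * u a ^ 2 + f b * u b ^ 2 :=
    Fintype.sum_eq_add a b hab fun i hi => by rw [hu i hi]; ring
  have horth : ∑ i, d i ^ r * u i = 0 := by
    rw [Fintype.sum_eq_add a b hab fun i hi => by rw [hu i hi, mul_zero], hua, hub]; ring
  have key := hvar u horth
  rw [hsum, dirichlet_energy_of_nonadjacent ω d hsym hdiag hd hab hωab hu, hua, hub] at key
  have hsq : ∀ i, d i ^ (2 * r) = (d i ^ r) ^ 2 := fun i => by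
    rw [mul_comm, Real.rpow_mul (hdpos i).le, Real.rpow_two]
  have hαpos := Real.rpow_pos_of_pos (hdpos a) r
  have hβpos := Real.rpow_pos_of_pos (hdpos b) r
  rw [hsq, hsq, le_div_iff₀ (by positivity)]
  linarith

/-- If the graph is not complete, then `λ₂`, characterized variationally by
`λ₂ ‖u‖_V² ≤ ‖∇u‖_E²` for all `u` orthogonal to constants, satisfies
`λ₂ ≤ (d_i d_j^{2r} + d_i^{2r} d_j)/(d_i^r d_j^{2r} + d_i^{2r} d_j^r)` for every
non-edge `(i,j)`. -/
theorem stmt_2 {V : Type*} [Fintype V] [Nonempty V]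
    (ω : V → V → ℝ) (hsym : ∀ i j, ω i j = ω j i) (hnonneg : ∀ i j, 0 ≤ ω i j)
    (hdiag : ∀ i, ω i i = 0)
    (d : V → ℝ) (hd : ∀ i, d i = ∑ j, ω i j) (hdpos : ∀ i, 0 < d i)
    (r : ℝ) (hr : r ∈ Set.Icc (0 : ℝ) 1)
    (lam2 : ℝ)
    (hvar : ∀ u : V → ℝ, (∑ i, d i ^ r * u i) = 0 →
      lam2 * (∑ i, d i ^ r * u i ^ 2) ≤ (1/2) * ∑ i, ∑ j, ω i j * (u i - u j) ^ 2)
    (hnoncomplete : ∃ a b : V, a ≠ b ∧ ω a b = 0) :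
    ∀ a b : V, a ≠ b → ω a b = 0 →
      lam2 ≤ (d a * d b ^ (2 * r) + d a ^ (2 * r) * d b) /
             (d a ^ r * d b ^ (2 * r) + d a ^ (2 * r) * d b ^ r) :=
  stmt_2_general ω hsym hdiag d hd hdpos r lam2 hvar
end

section
/- Total variation difference formula via curvatures: for any two vertex sets S, Ŝ ⊂ V, TV_a^q(χ_{Ŝ}) − TV_a^q(χ_S) = ⟨κ_{Ŝ} + κ_S, χ_{Ŝ} − χ_S⟩_V, where κ_S denotes the graph curvature of S. In particular ⟨κ_{Ŝ}, χ_S⟩_V = ⟨κ_S, χ_{Ŝ}⟩_V. -/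
open Finset

/-- The anisotropic graph total variation of `u`. -/
noncomputable def tva {V : Type*} [Fintype V] (ω : V → V → ℝ) (q : ℝ) (u : V → ℝ) : ℝ :=
  (1/2) * ∑ i, ∑ j, ω i j ^ q * |u i - u j|

/-- The indicator function of a vertex set `S`. -/
noncomputable def chi {V : Type*} [DecidableEq V] (S : Finset V) : V → ℝ :=
  fun i => if i ∈ S then 1 else 0

/-- The graph curvature of a vertex set `S`. -/
noncomputable def curv {V : Type*} [Fintype V] [DecidableEq V]
    (ω : V → V → ℝ) (d : V → ℝ) (q r : ℝ) (S : Finset V) : V → ℝ :=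
  fun i => if i ∈ S then d i ^ (-r) * ∑ j ∈ Sᶜ, ω i j ^ q
           else -(d i ^ (-r) * ∑ j ∈ S, ω i j ^ q)

/-! The curvature is the graph Laplacian-type operator `u ↦ ∑ⱼ ωᵢⱼ^q (uᵢ - uⱼ)` applied to `χ_S`,
rescaled by `dᵢ^(-r)`. Against `⟨·,·⟩_V` the rescaling cancels, and for a symmetric weight the
discrete Green identity turns `⟨κ_S, χ_Ŝ⟩_V` into the symmetric form
`½ ∑ᵢⱼ ωᵢⱼ^q (χ_S i - χ_S j)(χ_Ŝ i - χ_Ŝ j)`. On the diagonal this is `TV_a^q(χ_S)`, because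
`|χ_S i - χ_S j| = (χ_S i - χ_S j)²`; expanding `⟨κ_Ŝ + κ_S, χ_Ŝ - χ_S⟩_V` by bilinearity the
cross terms cancel. -/

theorem sum_sum_mul_sub_mul_eq_half {V : Type*} [Fintype V] (a : V → V → ℝ)
    (ha : ∀ i j, a i j = a j i) (u v : V → ℝ) :
    ∑ i, (∑ j, a i j * (u i - u j)) * v i
      = (1/2) * ∑ i, ∑ j, a i j * (u i - u j) * (v i - v j) := by
  have hsplit : ∑ i, ∑ j, a i j * (u i - u j) * (v i - v j)
      = ∑ i, ∑ j, a i j * (u i - u j) * v i + ∑ i, ∑ j, a i j * (u j - u i) * v j := by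
    rw [← sum_add_distrib]
    exact sum_congr rfl fun i _ => by rw [← sum_add_distrib]; exact sum_congr rfl fun j _ => by ring
  have hswap : ∑ i, ∑ j, a i j * (u j - u i) * v j = ∑ i, ∑ j, a i j * (u i - u j) * v i := by
    rw [sum_comm]
    exact sum_congr rfl fun i _ => sum_congr rfl fun j _ => by rw [ha]
  simp_rw [sum_mul] at *
  linarith

theorem abs_chi_sub_chi {V : Type*} [DecidableEq V] (X : Finset V) (i j : V) :
    |chi X i - chi X j| = (chi X i - chi X j) * (chi X i - chi X j) := by
  by_cases hi : i ∈ X <;> by_cases hj : j ∈ X <;> simp [chi, hi, hj]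

section

variable {V : Type*} [Fintype V] [DecidableEq V]

theorem sum_mul_chi_sub_chi (w : V → ℝ) (X : Finset V) (i : V) :
    ∑ j, w j * (chi X i - chi X j)
      = if i ∈ X then ∑ j ∈ Xᶜ, w j else -∑ j ∈ X, w j := by
  by_cases hi : i ∈ X
  · simp only [chi, hi, if_true, mul_sub, mul_one, mul_ite, mul_zero, sum_sub_distrib, sum_ite_mem,
      univ_inter]
    rw [← sum_compl_add_sum X]
    ring
  · simp [chi, hi, mul_ite]

theorem rpow_mul_curv {ω : V → V → ℝ} {d : V → ℝ} {i : V} (hdi : 0 < d i) (q r : ℝ)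
    (X : Finset V) :
    d i ^ r * curv ω d q r X i = ∑ j, ω i j ^ q * (chi X i - chi X j) := by
  have hcancel : d i ^ r * d i ^ (-r) = 1 := by
    rw [← Real.rpow_add hdi, add_neg_cancel, Real.rpow_zero]
  rw [sum_mul_chi_sub_chi, curv]
  split_ifs <;> simp only [mul_neg, ← mul_assoc, hcancel, one_mul]

variable {ω : V → V → ℝ} {d : V → ℝ}

theorem sum_rpow_mul_curv_mul_chi (hsym : ∀ i j, ω i j = ω j i) (hdpos : ∀ i, 0 < d i)
    (q r : ℝ) (X Y : Finset V) :
    ∑ i, d i ^ r * curv ω d q r X i * chi Y i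
      = (1/2) * ∑ i, ∑ j, ω i j ^ q * (chi X i - chi X j) * (chi Y i - chi Y j) := by
  simp only [rpow_mul_curv (hdpos _)]
  exact sum_sum_mul_sub_mul_eq_half (fun i j => ω i j ^ q) (fun i j => by rw [hsym]) _ _

theorem sum_rpow_mul_curv_mul_chi_comm (hsym : ∀ i j, ω i j = ω j i) (hdpos : ∀ i, 0 < d i)
    (q r : ℝ) (X Y : Finset V) :
    ∑ i, d i ^ r * curv ω d q r X i * chi Y i = ∑ i, d i ^ r * curv ω d q r Y i * chi X i := by
  simp only [sum_rpow_mul_curv_mul_chi hsym hdpos, mul_right_comm _ (chi X _ - chi X _)]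

theorem tva_chi_eq_sum_rpow_mul_curv_mul_chi (hsym : ∀ i j, ω i j = ω j i)
    (hdpos : ∀ i, 0 < d i) (q r : ℝ) (X : Finset V) :
    tva ω q (chi X) = ∑ i, d i ^ r * curv ω d q r X i * chi X i := by
  rw [sum_rpow_mul_curv_mul_chi hsym hdpos, tva]
  simp only [abs_chi_sub_chi, mul_assoc]

end

theorem stmt_10_general {V : Type*} [Fintype V] [DecidableEq V]
    (ω : V → V → ℝ) (hsym : ∀ i j, ω i j = ω j i)
    (d : V → ℝ) (hdpos : ∀ i, 0 < d i)
    (q : ℝ)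
    (r : ℝ)
    (S T : Finset V) :
    tva ω q (chi T) - tva ω q (chi S)
      = ∑ i, d i ^ r * ((curv ω d q r T i + curv ω d q r S i) * (chi T i - chi S i)) ∧
    (∑ i, d i ^ r * curv ω d q r T i * chi S i)
      = ∑ i, d i ^ r * curv ω d q r S i * chi T i := by
  have hcomm := sum_rpow_mul_curv_mul_chi_comm hsym hdpos q r T S
  refine ⟨?_, hcomm⟩
  set P : Finset V → Finset V → ℝ := fun X Y => ∑ i, d i ^ r * curv ω d q r X i * chi Y i
  have hexpand : ∑ i, d i ^ r * ((curv ω d q r T i + curv ω d q r S i) * (chi T i - chi S i))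
      = P T T - P T S + (P S T - P S S) := by
    simp only [P, ← sum_sub_distrib, ← sum_add_distrib]
    exact sum_congr rfl fun i _ => by ring
  rw [hexpand, tva_chi_eq_sum_rpow_mul_curv_mul_chi hsym hdpos q r T,
    tva_chi_eq_sum_rpow_mul_curv_mul_chi hsym hdpos q r S]
  simp only [P] at hcomm ⊢
  linarith

/-- Total variation difference formula: for any vertex sets `S, Ŝ`,
`TV_a^q(χ_Ŝ) - TV_a^q(χ_S) = ⟨κ_Ŝ + κ_S, χ_Ŝ - χ_S⟩_V`, and in particular
`⟨κ_Ŝ, χ_S⟩_V = ⟨κ_S, χ_Ŝ⟩_V`. -/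
theorem stmt_10 {V : Type*} [Fintype V] [DecidableEq V]
    (ω : V → V → ℝ) (hsym : ∀ i j, ω i j = ω j i) (hnonneg : ∀ i j, 0 ≤ ω i j)
    (hdiag : ∀ i, ω i i = 0)
    (d : V → ℝ) (hd : ∀ i, d i = ∑ j, ω i j) (hdpos : ∀ i, 0 < d i)
    (q : ℝ) (hq : q ∈ Set.Icc (1/2 : ℝ) 1)
    (r : ℝ) (hr : r ∈ Set.Icc (0 : ℝ) 1)
    (S T : Finset V) :
    tva ω q (chi T) - tva ω q (chi S)
      = ∑ i, d i ^ r * ((curv ω d q r T i + curv ω d q r S i) * (chi T i - chi S i)) ∧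
    (∑ i, d i ^ r * curv ω d q r T i * chi S i)
      = ∑ i, d i ^ r * curv ω d q r S i * chi T i :=
  stmt_10_general ω hsym d hdpos q r S T
end

section
/- Graph coarea formula: for any vertex function u, TV_a^q(u) = ∫_ℝ TV_a^q(χ_{E(s)}) ds, where E(s) = {i ∈ V : u_i > s} is the superlevel set. Moreover, if u₋ ≤ min_i u_i and max_i u_i ≤ u₊, the integral may be taken over [u₋, u₊]. -/
open Finset MeasureTheory

lemma abs_sub_ite_lt_eq_indicator (a b s : ℝ) :
    |(if s < a then (1 : ℝ) else 0) - (if s < b then 1 else 0)|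
      = (Set.Ico (min a b) (max a b)).indicator 1 s := by
  simp only [Set.indicator_apply, Set.mem_Ico, Pi.one_apply]
  split_ifs <;> grind

lemma integrable_abs_sub_ite_lt (a b : ℝ) :
    Integrable fun s : ℝ => |(if s < a then (1 : ℝ) else 0) - (if s < b then 1 else 0)| := by
  simp_rw [abs_sub_ite_lt_eq_indicator]
  exact (integrableOn_const (by simp)).integrable_indicator measurableSet_Ico

lemma integral_abs_sub_ite_lt (a b : ℝ) :
    ∫ s : ℝ, |(if s < a then (1 : ℝ) else 0) - (if s < b then 1 else 0)| = |a - b| := by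
  simp_rw [abs_sub_ite_lt_eq_indicator]
  rw [integral_indicator_one measurableSet_Ico, measureReal_def, Real.volume_Ico,
    ENNReal.toReal_ofReal (sub_nonneg.2 min_le_max), max_sub_min_eq_abs']

lemma tva_const {V : Type*} [Fintype V] (ω : V → V → ℝ) (q c : ℝ) :
    tva ω q (fun _ => c) = 0 := by
  simp [tva]

theorem tva_eq_integral_tva_superlevel {V : Type*} [Fintype V] (ω : V → V → ℝ) (q : ℝ)
    (u : V → ℝ) :
    tva ω q u = ∫ s : ℝ, tva ω q (fun i => if s < u i then (1 : ℝ) else 0) := by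
  have hint (i j : V) : Integrable fun s : ℝ =>
      ω i j ^ q * |(if s < u i then (1 : ℝ) else 0) - (if s < u j then 1 else 0)| :=
    (integrable_abs_sub_ite_lt (u i) (u j)).const_mul _
  simp only [tva]
  rw [integral_const_mul,
    integral_finsetSum _ fun i _ => integrable_finsetSum _ fun j _ => hint i j]
  refine congrArg _ (sum_congr rfl fun i _ => ?_)
  rw [integral_finsetSum _ fun j _ => hint i j]
  refine sum_congr rfl fun j _ => ?_
  rw [integral_const_mul, integral_abs_sub_ite_lt]

lemma tva_superlevel_eq_zero_of_notMem_Icc {V : Type*} [Fintype V] (ω : V → V → ℝ) (q : ℝ)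
    {u : V → ℝ} {um up s : ℝ} (hum : ∀ i, um ≤ u i) (hup : ∀ i, u i ≤ up)
    (hs : s ∉ Set.Icc um up) :
    tva ω q (fun i => if s < u i then (1 : ℝ) else 0) = 0 := by
  rcases not_and_or.1 hs with hs | hs
  · have hlt (i : V) : s < u i := (not_le.1 hs).trans_le (hum i)
    simpa [hlt] using tva_const ω q 1
  · have hge (i : V) : ¬ s < u i := not_lt.2 ((hup i).trans (not_le.1 hs).le)
    simpa [hge] using tva_const ω q 0

theorem stmt_12_general {V : Type*} [Fintype V]
    (ω : V → V → ℝ)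
    (q : ℝ)
    (u : V → ℝ) :
    tva ω q u = (∫ s : ℝ, tva ω q (fun i => if s < u i then (1 : ℝ) else 0)) ∧
    ∀ um up : ℝ, (∀ i, um ≤ u i) → (∀ i, u i ≤ up) →
      tva ω q u
        = ∫ s in Set.Icc um up, tva ω q (fun i => if s < u i then (1 : ℝ) else 0) := by
  refine ⟨tva_eq_integral_tva_superlevel ω q u, fun um up hum hup => ?_⟩
  rw [tva_eq_integral_tva_superlevel, setIntegral_eq_integral_of_forall_compl_eq_zero]
  exact fun s hs => tva_superlevel_eq_zero_of_notMem_Icc ω q hum hup hs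

/-- Graph coarea formula: `TV_a^q(u) = ∫_ℝ TV_a^q(χ_{E(s)}) ds` where
`E(s) = {i : u_i > s}`; moreover if `u₋ ≤ u ≤ u₊` pointwise, the integral may be
taken over `[u₋, u₊]`. -/
theorem stmt_12 {V : Type*} [Fintype V]
    (ω : V → V → ℝ) (hsym : ∀ i j, ω i j = ω j i) (hnonneg : ∀ i j, 0 ≤ ω i j)
    (q : ℝ) (hq : q ∈ Set.Icc (1/2 : ℝ) 1)
    (u : V → ℝ) :
    tva ω q u = (∫ s : ℝ, tva ω q (fun i => if s < u i then (1 : ℝ) else 0)) ∧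
    ∀ um up : ℝ, (∀ i, um ≤ u i) → (∀ i, u i ≤ up) →
      tva ω q u
        = ∫ s in Set.Icc um up, tva ω q (fun i => if s < u i then (1 : ℝ) else 0) :=
  stmt_12_general ω q u
end

section
/- Superlevel sets of minimizers of the convexified MCF functional minimize the set functional: for any m > 0 and fixed vertex function g (the signed distance to the interface divided by the time step), the convex problem min{ TV_a^q(u) + ⟨u, g⟩_V : u ∈ V_m } with V_m = {u : −m ≤ u_i ≤ m for all i} has a minimizer, and for every minimizer u and every s ∈ (−m, m), the superlevel set E(s) = {i : u_i > s} minimizes Ŝ ↦ TV_a^q(χ_{Ŝ}) + ⟨χ_{Ŝ}, g⟩_V over all subsets Ŝ ⊂ V. -/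
open Finset

/-!
Existence: the energy `J(u) = TV_a^q(u) + ⟨u, g⟩` is continuous and the box `[-m, m]^V` is compact.

Level sets: let `u` be a minimizer, `E = {u > s}` and `0 ≤ t ≤ 1`. For `ε > 0` smaller than every
nonzero gap `|u i - u j|` and than the distances from `s` to `±m`, the competitor
`u - ε χ_E + ε t` stays in the box. Subtracting `ε χ_E` lowers each gap across the level `s` by exactly
`ε` and leaves all other gaps alone, so `TV(u - ε χ_E) = TV(u) - ε TV(χ_E)`; together with the
subadditivity and homogeneity of `TV` and the linearity of `⟨·, g⟩` this gives
`J(u) ≤ J(u - ε χ_E + ε t) ≤ J(u) + ε (J(t) - J(χ_E))`, hence `J(χ_E) ≤ J(t)`.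
-/

open Filter Topology

/-- `superlevelIndicator u s` is `χ_{E(s)}` for the superlevel set `E(s) = {i | s < u i}`. -/
noncomputable def superlevelIndicator {V : Type*} (u : V → ℝ) (s : ℝ) : V → ℝ :=
  fun i => if s < u i then 1 else 0

lemma abs_sub_superlevelIndicator_sub {x y s ε : ℝ} (hgap : x ≠ y → ε ≤ |x - y|) :
    |(x - ε * (if s < x then 1 else 0)) - (y - ε * (if s < y then 1 else 0))|
      = |x - y| - ε * |(if s < x then (1 : ℝ) else 0) - (if s < y then 1 else 0)| := by
  split_ifs with hx hy hy
  · simp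
  · have hgap' : ε ≤ x - y := by
      have := hgap (by intro h; subst h; exact hy hx)
      rwa [abs_of_pos (by linarith)] at this
    rw [abs_of_nonneg (by linarith), abs_of_pos (by linarith)]
    norm_num
    ring
  · have hgap' : ε ≤ y - x := by
      have := hgap (by intro h; subst h; exact hx hy)
      rwa [abs_of_neg (by linarith), neg_sub] at this
    rw [abs_of_nonpos (by linarith), abs_of_neg (by linarith)]
    norm_num
    ring
  · simp

section TotalVariation

variable {V : Type*} [Fintype V] (ω : V → V → ℝ) (q : ℝ)

lemma continuous_tva : Continuous (tva ω q) := by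
  unfold tva
  fun_prop

lemma tva_add_le (hω : ∀ i j, 0 ≤ ω i j) (u v : V → ℝ) :
    tva ω q (u + v) ≤ tva ω q u + tva ω q v := by
  have hpair : ∀ i j, |(u + v) i - (u + v) j| ≤ |u i - u j| + |v i - v j| := fun i j => by
    simpa only [Pi.add_apply, add_sub_add_comm] using abs_add_le (u i - u j) (v i - v j)
  simp only [tva, ← mul_add, ← sum_add_distrib]
  gcongr with i _ j _
  · exact Real.rpow_nonneg (hω i j) q
  · exact hpair i j

lemma tva_smul (c : ℝ) (u : V → ℝ) : tva ω q (c • u) = |c| * tva ω q u := by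
  simp only [tva, Pi.smul_apply, smul_eq_mul, ← mul_sub, abs_mul, mul_sum]
  exact sum_congr rfl fun i _ => sum_congr rfl fun j _ => by ring

lemma tva_sub_smul_superlevelIndicator (u : V → ℝ) (s : ℝ) {ε : ℝ}
    (hgap : ∀ i j, u i ≠ u j → ε ≤ |u i - u j|) :
    tva ω q (u - ε • superlevelIndicator u s)
      = tva ω q u - ε * tva ω q (superlevelIndicator u s) := by
  simp only [tva, Pi.sub_apply, Pi.smul_apply, smul_eq_mul, superlevelIndicator,
    abs_sub_superlevelIndicator_sub (hgap _ _), mul_sub, sum_sub_distrib, mul_sum]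
  exact congrArg _ (sum_congr rfl fun i _ => sum_congr rfl fun j _ => by ring)

end TotalVariation

lemma sub_superlevelIndicator_add_mem_Icc {x s ε τ m : ℝ} (hx : x ∈ Set.Icc (-m) m)
    (hε : 0 ≤ ε) (hεs : ε ≤ s + m) (hεs' : ε ≤ m - s) (hτ : τ ∈ Set.Icc 0 1) :
    x - ε * (if s < x then 1 else 0) + ε * τ ∈ Set.Icc (-m) m := by
  obtain ⟨hx₀, hx₁⟩ := hx
  have hετ₀ : 0 ≤ ε * τ := mul_nonneg hε hτ.1
  have hετ₁ : ε * τ ≤ ε := mul_le_of_le_one_right hε hτ.2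
  split_ifs with hsx <;> constructor <;> linarith

lemma eventually_le_abs_sub_of_ne {V : Type*} [Finite V] (u : V → ℝ) :
    ∀ᶠ ε in 𝓝[>] 0, ∀ i j, u i ≠ u j → ε ≤ |u i - u j| := by
  simp only [eventually_all]
  exact fun i j hij => nhdsWithin_le_nhds (eventually_le_nhds (abs_pos.2 (sub_ne_zero.2 hij)))

lemma exists_forall_le_of_continuous_pi_Icc {V : Type*} [Finite V] {f : (V → ℝ) → ℝ}
    (hf : Continuous f) {a b : ℝ} (hab : a ≤ b) :
    ∃ u : V → ℝ, (∀ i, u i ∈ Set.Icc a b) ∧ ∀ v : V → ℝ, (∀ i, v i ∈ Set.Icc a b) → f u ≤ f v := by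
  have hK : IsCompact (Set.univ.pi fun _ : V => Set.Icc a b) :=
    isCompact_univ_pi fun _ => isCompact_Icc
  obtain ⟨u, hu, hmin⟩ :=
    hK.exists_isMinOn ⟨fun _ => a, Set.mem_univ_pi.2 fun _ => ⟨le_rfl, hab⟩⟩ hf.continuousOn
  exact ⟨u, Set.mem_univ_pi.1 hu, fun v hv => hmin (Set.mem_univ_pi.2 hv)⟩

section Energy

variable {V : Type*} [Fintype V] (ω : V → V → ℝ) (q : ℝ) (w g : V → ℝ)

/-- `TV_a^q(u) + ⟨u, g⟩_w`; the weights are `w i = d i ^ r` in the `d^r`-weighted inner product. -/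
noncomputable def mcfEnergy (u : V → ℝ) : ℝ :=
  tva ω q u + ∑ i, w i * u i * g i

lemma continuous_mcfEnergy : Continuous (mcfEnergy ω q w g) := by
  unfold mcfEnergy
  exact (continuous_tva ω q).add (by fun_prop)

lemma mcfEnergy_sub_superlevelIndicator_add_le (hω : ∀ i j, 0 ≤ ω i j) (u : V → ℝ) (s : ℝ)
    {ε : ℝ} (hε : 0 ≤ ε) (hgap : ∀ i j, u i ≠ u j → ε ≤ |u i - u j|) (t : V → ℝ) :
    mcfEnergy ω q w g (u - ε • superlevelIndicator u s + ε • t)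
      ≤ mcfEnergy ω q w g u
        + ε * (mcfEnergy ω q w g t - mcfEnergy ω q w g (superlevelIndicator u s)) := by
  have htva := tva_add_le ω q hω (u - ε • superlevelIndicator u s) (ε • t)
  rw [tva_sub_smul_superlevelIndicator ω q u s hgap, tva_smul, abs_of_nonneg hε] at htva
  have hlin : ∑ i, w i * (u - ε • superlevelIndicator u s + ε • t) i * g i
      = ∑ i, w i * u i * g i
        + ε * (∑ i, w i * t i * g i - ∑ i, w i * superlevelIndicator u s i * g i) := by
    simp only [Pi.add_apply, Pi.sub_apply, Pi.smul_apply, smul_eq_mul, mul_sub, mul_sum,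
      ← sum_sub_distrib, ← sum_add_distrib]
    exact sum_congr rfl fun i _ => by ring
  unfold mcfEnergy
  linarith

lemma mcfEnergy_superlevelIndicator_le (hω : ∀ i j, 0 ≤ ω i j) {m : ℝ} {u : V → ℝ}
    (hu : ∀ i, u i ∈ Set.Icc (-m) m)
    (hmin : ∀ v : V → ℝ, (∀ i, v i ∈ Set.Icc (-m) m) → mcfEnergy ω q w g u ≤ mcfEnergy ω q w g v)
    {s : ℝ} (hs : s ∈ Set.Ioo (-m) m) {t : V → ℝ} (ht : ∀ i, t i ∈ Set.Icc 0 1) :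
    mcfEnergy ω q w g (superlevelIndicator u s) ≤ mcfEnergy ω q w g t := by
  have hsm : ∀ᶠ ε in 𝓝[>] 0, ε ≤ s + m :=
    nhdsWithin_le_nhds (eventually_le_nhds (by linarith [hs.1]))
  have hms : ∀ᶠ ε in 𝓝[>] 0, ε ≤ m - s :=
    nhdsWithin_le_nhds (eventually_le_nhds (by linarith [hs.2]))
  obtain ⟨ε, ⟨⟨hgap, hεs⟩, hεs'⟩, hε⟩ :=
    (((eventually_le_abs_sub_of_ne u).and hsm).and hms).and self_mem_nhdsWithin |>.exists
  have hcompetitor := hmin (u - ε • superlevelIndicator u s + ε • t) fun i =>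
    sub_superlevelIndicator_add_mem_Icc (hu i) (le_of_lt hε) hεs hεs' (ht i)
  have hperturb := mcfEnergy_sub_superlevelIndicator_add_le ω q w g hω u s (le_of_lt hε) hgap t
  have hdiff : 0 ≤ ε * (mcfEnergy ω q w g t - mcfEnergy ω q w g (superlevelIndicator u s)) := by
    linarith
  exact sub_nonneg.1 ((mul_nonneg_iff_of_pos_left hε).1 hdiff)

end Energy

theorem stmt_13_general {V : Type*} [Fintype V] [DecidableEq V]
    (ω : V → V → ℝ) (hnonneg : ∀ i j, 0 ≤ ω i j)
    (d : V → ℝ) (q : ℝ) (r : ℝ)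
    (m : ℝ) (hm : 0 < m) (g : V → ℝ) :
    (∃ u : V → ℝ, (∀ i, -m ≤ u i ∧ u i ≤ m) ∧
      ∀ v : V → ℝ, (∀ i, -m ≤ v i ∧ v i ≤ m) →
        tva ω q u + ∑ i, d i ^ r * u i * g i
          ≤ tva ω q v + ∑ i, d i ^ r * v i * g i) ∧
    (∀ u : V → ℝ, (∀ i, -m ≤ u i ∧ u i ≤ m) →
      (∀ v : V → ℝ, (∀ i, -m ≤ v i ∧ v i ≤ m) →
        tva ω q u + ∑ i, d i ^ r * u i * g i
          ≤ tva ω q v + ∑ i, d i ^ r * v i * g i) →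
      ∀ s : ℝ, -m < s → s < m →
        ∀ T : Finset V,
          tva ω q (fun i => if s < u i then (1 : ℝ) else 0) +
              ∑ i, d i ^ r * (if s < u i then (1 : ℝ) else 0) * g i
            ≤ tva ω q (chi T) + ∑ i, d i ^ r * chi T i * g i) := by
  refine ⟨exists_forall_le_of_continuous_pi_Icc
    (continuous_mcfEnergy ω q (fun i => d i ^ r) g) (by linarith), ?_⟩
  intro u hu hmin s hs₁ hs₂ T
  have hT : ∀ i, chi T i ∈ Set.Icc 0 1 := fun i => by
    unfold chi
    split_ifs <;> norm_num
  exact mcfEnergy_superlevelIndicator_le ω q (fun i => d i ^ r) g hnonneg hu hmin ⟨hs₁, hs₂⟩ hT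

/-- The convex problem `min { TV_a^q(u) + ⟨u,g⟩_V : -m ≤ u ≤ m }` has a minimizer,
and for every minimizer `u` and every `s ∈ (-m, m)`, the superlevel set
`E(s) = {i : u_i > s}` minimizes `Ŝ ↦ TV_a^q(χ_Ŝ) + ⟨χ_Ŝ, g⟩_V` over all subsets. -/
theorem stmt_13 {V : Type*} [Fintype V] [DecidableEq V]
    (ω : V → V → ℝ) (hsym : ∀ i j, ω i j = ω j i) (hnonneg : ∀ i j, 0 ≤ ω i j)
    (d : V → ℝ) (hd : ∀ i, d i = ∑ j, ω i j) (hdpos : ∀ i, 0 < d i)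
    (q : ℝ) (hq : q ∈ Set.Icc (1/2 : ℝ) 1)
    (r : ℝ) (hr : r ∈ Set.Icc (0 : ℝ) 1)
    (m : ℝ) (hm : 0 < m) (g : V → ℝ) :
    (∃ u : V → ℝ, (∀ i, -m ≤ u i ∧ u i ≤ m) ∧
      ∀ v : V → ℝ, (∀ i, -m ≤ v i ∧ v i ≤ m) →
        tva ω q u + ∑ i, d i ^ r * u i * g i
          ≤ tva ω q v + ∑ i, d i ^ r * v i * g i) ∧
    (∀ u : V → ℝ, (∀ i, -m ≤ u i ∧ u i ≤ m) →
      (∀ v : V → ℝ, (∀ i, -m ≤ v i ∧ v i ≤ m) →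
        tva ω q u + ∑ i, d i ^ r * u i * g i
          ≤ tva ω q v + ∑ i, d i ^ r * v i * g i) →
      ∀ s : ℝ, -m < s → s < m →
        ∀ T : Finset V,
          tva ω q (fun i => if s < u i then (1 : ℝ) else 0) +
              ∑ i, d i ^ r * (if s < u i then (1 : ℝ) else 0) * g i
            ≤ tva ω q (chi T) + ∑ i, d i ^ r * chi T i * g i) :=
  stmt_13_general ω hnonneg d q r m hm g
end

section
/- MBO pinning (spectral bound): let ρ be the spectral radius of the graph Laplacian and S ⊂ V. If τ < ρ^{−1} log(1 + (1/2) d₋^{r/2} (vol S)^{−1/2}), then ‖e^{−τΔ}χ_S − χ_S‖_{V,∞} < 1/2, and hence one MBO iteration with time step τ (diffuse by e^{−τΔ} and threshold at 1/2) leaves S unchanged. -/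
/-!
The squared weighted norm `∑ dᵢʳ uᵢ²` of the heat flow `u' = -Δu` is nonincreasing, because the
Dirichlet form `⟨u, Δu⟩_V = ½ ∑ᵢⱼ ωᵢⱼ (uᵢ - uⱼ)²` is nonnegative; so `‖u(t)‖_V² ≤ ‖χ_S‖_V² = vol S`.
The spectral bound gives `‖Δu(t)‖_V ≤ ρ √(vol S)`, and since `d₋^{r/2} |vᵢ| ≤ ‖v‖_V` the speed of
every coordinate is at most `C = ρ √(vol S) d₋^{-r/2}`. Hence `|u(τ) - χ_S| ≤ C τ`, and
`C τ < C ρ⁻¹ log (1 + x) ≤ C ρ⁻¹ x = 1/2` for `x = ½ d₋^{r/2} (vol S)^{-1/2}`.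
-/

open Finset

noncomputable section GraphLaplacian

variable {V : Type*} [Fintype V]

def graphLaplacian (ω : V → V → ℝ) (d : V → ℝ) (r : ℝ) (w : V → ℝ) (i : V) : ℝ :=
  d i ^ (-r) * ∑ j, ω i j * (w i - w j)

def weightedNormSq (d : V → ℝ) (r : ℝ) (w : V → ℝ) : ℝ :=
  ∑ i, d i ^ r * w i ^ 2

theorem sum_mul_sum_mul_sub_nonneg {ω : V → V → ℝ} (hsym : ∀ i j, ω i j = ω j i)
    (hnonneg : ∀ i j, 0 ≤ ω i j) (w : V → ℝ) :
    0 ≤ ∑ i, w i * ∑ j, ω i j * (w i - w j) := by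
  have hswap : ∑ i, w i * ∑ j, ω i j * (w i - w j) = ∑ i, ∑ j, ω i j * w j * (w j - w i) := by
    simp only [mul_sum]
    rw [sum_comm]
    exact sum_congr rfl fun i _ => sum_congr rfl fun j _ => by rw [hsym]; ring
  have hdouble : 2 * ∑ i, w i * ∑ j, ω i j * (w i - w j) = ∑ i, ∑ j, ω i j * (w i - w j) ^ 2 := by
    rw [two_mul]
    nth_rewrite 2 [hswap]
    simp only [mul_sum, ← sum_add_distrib]
    exact sum_congr rfl fun i _ => sum_congr rfl fun j _ => by ring
  have hsq : 0 ≤ ∑ i, ∑ j, ω i j * (w i - w j) ^ 2 :=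
    sum_nonneg fun i _ => sum_nonneg fun j _ => mul_nonneg (hnonneg i j) (sq_nonneg _)
  linarith

variable {ω : V → V → ℝ} {d : V → ℝ} {r : ℝ}

theorem sum_weight_mul_graphLaplacian_nonneg (hsym : ∀ i j, ω i j = ω j i)
    (hnonneg : ∀ i j, 0 ≤ ω i j) (hdpos : ∀ i, 0 < d i) (w : V → ℝ) :
    0 ≤ ∑ i, d i ^ r * w i * graphLaplacian ω d r w i := by
  have hcancel : ∀ i, d i ^ r * d i ^ (-r) = 1 := fun i => by
    rw [← Real.rpow_add (hdpos i), add_neg_cancel, Real.rpow_zero]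
  calc 0 ≤ ∑ i, w i * ∑ j, ω i j * (w i - w j) := sum_mul_sum_mul_sub_nonneg hsym hnonneg w
    _ = ∑ i, d i ^ r * w i * graphLaplacian ω d r w i :=
      sum_congr rfl fun i _ => by
        rw [graphLaplacian, ← one_mul (w i * _), ← hcancel i]; ring

theorem antitone_weightedNormSq_of_hasDerivAt (hsym : ∀ i j, ω i j = ω j i)
    (hnonneg : ∀ i j, 0 ≤ ω i j) (hdpos : ∀ i, 0 < d i) {u : ℝ → V → ℝ}
    (hode : ∀ t i, HasDerivAt (fun s => u s i) (-graphLaplacian ω d r (u t) i) t) :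
    Antitone fun t => weightedNormSq d r (u t) := by
  have hderiv : ∀ t, HasDerivAt (fun t => weightedNormSq d r (u t))
      (-(2 * ∑ i, d i ^ r * u t i * graphLaplacian ω d r (u t) i)) t := by
    intro t
    have := HasDerivAt.fun_sum fun i (_ : i ∈ univ) => ((hode t i).pow 2).const_mul (d i ^ r)
    refine this.congr_deriv ?_
    rw [mul_sum, ← sum_neg_distrib]
    exact sum_congr rfl fun i _ => by push_cast; ring
  refine antitone_of_deriv_nonpos (fun t => (hderiv t).differentiableAt) fun t => ?_
  rw [(hderiv t).deriv, neg_nonpos]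
  exact mul_nonneg two_pos.le (sum_weight_mul_graphLaplacian_nonneg hsym hnonneg hdpos _)

theorem rpow_half_mul_abs_le_sqrt_weightedNormSq (hdpos : ∀ i, 0 < d i) (hr : 0 ≤ r) {m : ℝ}
    (hm : 0 ≤ m) (w : V → ℝ) {i : V} (hmi : m ≤ d i) :
    m ^ (r / 2) * |w i| ≤ √(weightedNormSq d r w) := by
  have hmr : m ^ r ≤ d i ^ r := Real.rpow_le_rpow hm hmi hr
  have hterm : d i ^ r * w i ^ 2 ≤ weightedNormSq d r w :=
    single_le_sum (f := fun k => d k ^ r * w k ^ 2)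
      (fun k _ => mul_nonneg (Real.rpow_nonneg (hdpos k).le r) (sq_nonneg _)) (mem_univ i)
  have hsq : (m ^ (r / 2) * |w i|) ^ 2 = m ^ r * w i ^ 2 := by
    rw [mul_pow, sq_abs, ← Real.rpow_natCast, ← Real.rpow_mul hm]; norm_num
  rw [← Real.sqrt_sq (by positivity : 0 ≤ m ^ (r / 2) * |w i|), hsq]
  exact Real.sqrt_le_sqrt (le_trans (by gcongr) hterm)

theorem rpow_half_mul_abs_graphLaplacian_le (hdpos : ∀ i, 0 < d i) (hr : 0 ≤ r) {m ρ : ℝ}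
    (hm : 0 ≤ m) (hρ : 0 ≤ ρ) {w : V → ℝ}
    (hspec : weightedNormSq d r (graphLaplacian ω d r w) ≤ ρ ^ 2 * weightedNormSq d r w)
    {i : V} (hmi : m ≤ d i) :
    m ^ (r / 2) * |graphLaplacian ω d r w i| ≤ ρ * √(weightedNormSq d r w) := by
  refine (rpow_half_mul_abs_le_sqrt_weightedNormSq hdpos hr hm _ hmi).trans ?_
  rw [← Real.sqrt_sq hρ, ← Real.sqrt_mul (sq_nonneg ρ)]
  exact Real.sqrt_le_sqrt hspec

end GraphLaplacian

theorem weightedNormSq_chi {V : Type*} [Fintype V] [DecidableEq V] (d : V → ℝ) (r : ℝ)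
    (S : Finset V) : weightedNormSq d r (chi S) = ∑ i ∈ S, d i ^ r := by
  simp [weightedNormSq, chi, apply_ite (· ^ 2), sum_ite_mem]

theorem half_le_iff_mem_of_abs_sub_chi_lt {V : Type*} [DecidableEq V] {S : Finset V}
    {v : V → ℝ} {i : V} (h : |v i - chi S i| < 1 / 2) : 1 / 2 ≤ v i ↔ i ∈ S := by
  rw [abs_lt] at h
  by_cases hi : i ∈ S <;> simp only [chi, hi, if_true, if_false] at h <;>
    simp only [hi, iff_true, iff_false, not_le] <;> linarith

theorem mul_div_mul_lt_half_of_lt_inv_mul_log {ρ τ a b : ℝ} (hρ : 0 < ρ) (ha : 0 < a)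
    (hb : 0 < b) (hτ : τ < ρ⁻¹ * Real.log (1 + 1 / 2 * a * b⁻¹)) : ρ * b / a * τ < 1 / 2 := by
  have hlog : Real.log (1 + 1 / 2 * a * b⁻¹) ≤ 1 / 2 * a * b⁻¹ := by
    have := Real.log_le_sub_one_of_pos (show 0 < 1 + 1 / 2 * a * b⁻¹ by positivity)
    linarith
  have hρτ : ρ * τ < 1 / 2 * a * b⁻¹ := by
    calc ρ * τ < ρ * (ρ⁻¹ * Real.log (1 + 1 / 2 * a * b⁻¹)) := by gcongr
      _ = Real.log (1 + 1 / 2 * a * b⁻¹) := by field_simp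
      _ ≤ 1 / 2 * a * b⁻¹ := hlog
  calc ρ * b / a * τ = b / a * (ρ * τ) := by ring
    _ < b / a * (1 / 2 * a * b⁻¹) := by gcongr
    _ = 1 / 2 := by field_simp

theorem stmt_14_general {V : Type*} [Fintype V] [Nonempty V] [DecidableEq V]
    (ω : V → V → ℝ) (hsym : ∀ i j, ω i j = ω j i) (hnonneg : ∀ i j, 0 ≤ ω i j)
    (d : V → ℝ) (hdpos : ∀ i, 0 < d i)
    (r : ℝ) (hr : r ∈ Set.Icc (0 : ℝ) 1)
    (ρ : ℝ) (hρpos : 0 < ρ)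
    (hρ : ∀ w : V → ℝ,
      ∑ i, d i ^ r * (d i ^ (-r) * ∑ j, ω i j * (w i - w j)) ^ 2
        ≤ ρ ^ 2 * ∑ i, d i ^ r * w i ^ 2)
    (S : Finset V)
    (u : ℝ → V → ℝ) (hu0 : u 0 = chi S)
    (hode : ∀ (t : ℝ) (i : V), HasDerivAt (fun s => u s i)
      (-(d i ^ (-r) * ∑ j, ω i j * (u t i - u t j))) t)
    (τ : ℝ) (hτ0 : 0 < τ)
    (hτ : τ < ρ⁻¹ * Real.log (1 + (1/2) * (univ.inf' univ_nonempty d) ^ (r/2) *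
      (∑ i ∈ S, d i ^ r) ^ (-(1/2 : ℝ)))) :
    (∀ i, |u τ i - chi S i| < 1/2) ∧ (∀ i, (1/2 ≤ u τ i ↔ i ∈ S)) := by
  set m := univ.inf' univ_nonempty d
  set vol := ∑ i ∈ S, d i ^ r
  have hm : 0 < m := (lt_inf'_iff _).mpr fun i _ => hdpos i
  -- for `vol = 0` Lean reads `0 ^ (-1/2)` as `0`, and then `hτ` says `τ < 0`
  have hvol : 0 < vol := by
    refine (show 0 ≤ vol from sum_nonneg fun i _ => Real.rpow_nonneg (hdpos i).le r).lt_of_ne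
      fun h => ?_
    rw [← h, Real.zero_rpow (by norm_num)] at hτ
    simp only [mul_zero, add_zero, Real.log_one] at hτ
    linarith
  set C := ρ * √vol / m ^ (r / 2)
  have hnorm : ∀ t, 0 ≤ t → weightedNormSq d r (u t) ≤ vol := fun t ht =>
    (antitone_weightedNormSq_of_hasDerivAt hsym hnonneg hdpos hode ht).trans_eq
      ((congrArg (weightedNormSq d r) hu0).trans (weightedNormSq_chi d r S))
  have hspeed : ∀ t ∈ Set.Icc 0 τ, ∀ i, ‖-graphLaplacian ω d r (u t) i‖ ≤ C := by
    intro t ht i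
    rw [norm_neg, Real.norm_eq_abs, le_div_iff₀ (by positivity), mul_comm]
    exact (rpow_half_mul_abs_graphLaplacian_le hdpos hr.1 hm.le hρpos.le (hρ (u t))
      (inf'_le d (mem_univ i))).trans (by gcongr; exact hnorm t ht.1)
  have hmain : ∀ i, |u τ i - chi S i| < 1 / 2 := by
    intro i
    have hmove := (convex_Icc 0 τ).norm_image_sub_le_of_norm_hasDerivWithin_le
      (fun t _ => (hode t i).hasDerivWithinAt) (fun t ht => hspeed t ht i)
      (Set.left_mem_Icc.mpr hτ0.le) (Set.right_mem_Icc.mpr hτ0.le)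
    rw [Real.norm_eq_abs, Real.norm_eq_abs, sub_zero, abs_of_pos hτ0, hu0] at hmove
    refine hmove.trans_lt (mul_div_mul_lt_half_of_lt_inv_mul_log hρpos (by positivity)
      (Real.sqrt_pos.mpr hvol) ?_)
    rwa [Real.sqrt_eq_rpow, ← Real.rpow_neg hvol.le]
  exact ⟨hmain, fun i => half_le_iff_mem_of_abs_sub_chi_lt (hmain i)⟩

/-- MBO pinning (spectral bound): if `ρ` bounds the graph Laplacian in `V`-norm
and `τ < ρ⁻¹ log(1 + (1/2) d₋^{r/2} (vol S)^{-1/2})`, then the diffused indicator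
`u(τ) = e^{-τΔ}χ_S` satisfies `‖u(τ) - χ_S‖_{V,∞} < 1/2`, so thresholding at `1/2`
returns exactly `S`. -/
theorem stmt_14 {V : Type*} [Fintype V] [Nonempty V] [DecidableEq V]
    (ω : V → V → ℝ) (hsym : ∀ i j, ω i j = ω j i) (hnonneg : ∀ i j, 0 ≤ ω i j)
    (d : V → ℝ) (hd : ∀ i, d i = ∑ j, ω i j) (hdpos : ∀ i, 0 < d i)
    (r : ℝ) (hr : r ∈ Set.Icc (0 : ℝ) 1)
    (ρ : ℝ) (hρpos : 0 < ρ)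
    (hρ : ∀ w : V → ℝ,
      ∑ i, d i ^ r * (d i ^ (-r) * ∑ j, ω i j * (w i - w j)) ^ 2
        ≤ ρ ^ 2 * ∑ i, d i ^ r * w i ^ 2)
    (S : Finset V)
    (u : ℝ → V → ℝ) (hu0 : u 0 = chi S)
    (hode : ∀ (t : ℝ) (i : V), HasDerivAt (fun s => u s i)
      (-(d i ^ (-r) * ∑ j, ω i j * (u t i - u t j))) t)
    (τ : ℝ) (hτ0 : 0 < τ)
    (hτ : τ < ρ⁻¹ * Real.log (1 + (1/2) * (univ.inf' univ_nonempty d) ^ (r/2) *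
      (∑ i ∈ S, d i ^ r) ^ (-(1/2 : ℝ)))) :
    (∀ i, |u τ i - chi S i| < 1/2) ∧ (∀ i, (1/2 ≤ u τ i ↔ i ∈ S)) :=
  stmt_14_general ω hsym hnonneg d hdpos r hr ρ hρpos hρ S u hu0 hode τ hτ0 hτ
end

section
/- MBO pinning (curvature bound): for S ⊂ V, if τ ≤ 1/(2‖Δχ_S‖_{V,∞}), then ‖e^{−τΔ}χ_S − χ_S‖_{V,∞} ≤ 1/2 and τ‖Δχ_S‖_{V,∞} bounds the deviation; more precisely ‖e^{−τΔ}χ_S − χ_S‖_{V,∞} ≤ τ‖Δχ_S‖_{V,∞}. -/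
open Finset

/-!
`Δu` solves the same equation as `u`, namely `(Δu)' = -Δ(Δu)`, and for `c ≥ maxᵢ dᵢ^{-r} dᵢ`
the matrix `c - Δ` is nonnegative with row sums `c`, so `‖-Δf + c f‖ ≤ c ‖f‖`. Hence
`e^{cs} Δu(s)` moves at speed at most `c e^{cs} K` on `[0, t₁]`, where `K = ‖Δu(t₁)‖` is
the maximum of `‖Δu‖` on `[0, t]`; comparing the two ends gives `K ≤ ‖Δχ_S‖` (maximum
principle). The mean value inequality then gives `‖u(τ) - χ_S‖ ≤ τ ‖Δχ_S‖`.
-/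

open Real Set

theorem norm_le_norm_zero_of_dissipative {E : Type*} [NormedAddCommGroup E] [NormedSpace ℝ E]
    {g G : ℝ → E} {c : ℝ} (hc : 0 ≤ c) (hg : ∀ t, HasDerivAt g (G t) t)
    (hG : ∀ t, ‖G t + c • g t‖ ≤ c * ‖g t‖) {t : ℝ} (ht : 0 ≤ t) : ‖g t‖ ≤ ‖g 0‖ := by
  have hgc : Continuous g := continuous_iff_continuousAt.2 fun s => (hg s).continuousAt
  obtain ⟨t₁, ⟨ht₁0, ht₁t⟩, hmax⟩ :=
    isCompact_Icc.exists_isMaxOn (nonempty_Icc.2 ht) hgc.norm.continuousOn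
  set K := ‖g t₁‖
  have hK : ∀ s ∈ Icc 0 t₁, ‖g s‖ ≤ K := fun s hs => hmax ⟨hs.1, hs.2.trans ht₁t⟩
  have hexp : ∀ s, HasDerivAt (fun s => exp (c * s)) (exp (c * s) * c) s := fun s => by
    simpa using ((hasDerivAt_id s).const_mul c).exp
  have hfence : ‖exp (c * t₁) • g t₁ - g 0‖ ≤ K * (exp (c * t₁) - 1) := by
    refine image_norm_le_of_norm_deriv_right_le_deriv_boundary
      (f := fun s => exp (c * s) • g s - g 0) (f' := fun s => exp (c * s) • (G s + c • g s))
      (B := fun s => K * (exp (c * s) - 1)) (B' := fun s => K * (exp (c * s) * c))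
      ?_ (fun s _ => ?_) (by simp) (fun s => ((hexp s).sub_const 1).const_mul K)
      (fun s hs => ?_) ⟨ht₁0, le_rfl⟩
    · exact (((continuous_const.mul continuous_id).rexp).smul hgc).sub continuous_const
        |>.continuousOn
    · refine (((hexp s).smul (hg s)).sub_const (g 0)).hasDerivWithinAt.congr_deriv ?_
      rw [smul_add, smul_smul, add_comm, mul_comm c]
    · rw [norm_smul, norm_of_nonneg (exp_pos _).le]
      calc exp (c * s) * ‖G s + c • g s‖ ≤ exp (c * s) * (c * K) :=
            mul_le_mul_of_nonneg_left ((hG s).trans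
              (mul_le_mul_of_nonneg_left (hK s (Ico_subset_Icc_self hs)) hc)) (exp_pos _).le
        _ = K * (exp (c * s) * c) := by ring
  have hends : exp (c * t₁) * K ≤ ‖g 0‖ + K * (exp (c * t₁) - 1) := by
    have h := norm_sub_norm_le (exp (c * t₁) • g t₁) (g 0)
    rw [norm_smul, norm_of_nonneg (exp_pos _).le] at h
    linarith
  calc ‖g t‖ ≤ K := hmax ⟨ht, le_rfl⟩
    _ ≤ ‖g 0‖ := by linarith

section WeightedLaplacian

variable {V : Type*} [Fintype V]

theorem sup'_univ_abs_eq_norm [Nonempty V] (f : V → ℝ) :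
    univ.sup' univ_nonempty (fun i => |f i|) = ‖f‖ := by
  refine le_antisymm (sup'_le _ _ fun i _ => norm_le_pi_norm f i) ?_
  refine (pi_norm_le_iff_of_nonneg ?_).2 fun i => le_sup' (fun i => |f i|) (mem_univ i)
  exact le_sup'_of_le _ (mem_univ (Classical.arbitrary V)) (abs_nonneg _)

def weightedLaplacian (a : V → ℝ) (ω : V → V → ℝ) (f : V → ℝ) : V → ℝ :=
  fun i => a i * ∑ j, ω i j * (f i - f j)

variable {a : V → ℝ} {ω : V → V → ℝ}

theorem HasDerivAt.weightedLaplacian {f : ℝ → V → ℝ} {f' : V → ℝ} {t : ℝ}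
    (hf : HasDerivAt f f' t) :
    HasDerivAt (fun s => weightedLaplacian a ω (f s)) (weightedLaplacian a ω f') t := by
  rw [hasDerivAt_pi] at hf ⊢
  exact fun i =>
    (HasDerivAt.fun_sum fun j _ => ((hf i).sub (hf j)).const_mul (ω i j)).const_mul (a i)

theorem weightedLaplacian_neg (f : V → ℝ) :
    weightedLaplacian a ω (-f) = -weightedLaplacian a ω f := by
  ext i
  simp only [weightedLaplacian, Pi.neg_apply, ← mul_neg, ← sum_neg_distrib]
  congr 1
  exact sum_congr rfl fun j _ => by ring

theorem norm_neg_weightedLaplacian_add_smul_le (ha : ∀ i, 0 ≤ a i) (hω : ∀ i j, 0 ≤ ω i j)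
    {c : ℝ} (hc0 : 0 ≤ c) (hc : ∀ i, a i * ∑ j, ω i j ≤ c) (f : V → ℝ) :
    ‖-weightedLaplacian a ω f + c • f‖ ≤ c * ‖f‖ := by
  refine pi_norm_le_iff_of_nonneg (mul_nonneg hc0 (norm_nonneg f)) |>.2 fun i => ?_
  have hf : ∀ j, ‖f j‖ ≤ ‖f‖ := norm_le_pi_norm f
  have hsplit : (-weightedLaplacian a ω f + c • f) i
      = (c - a i * ∑ j, ω i j) * f i + a i * ∑ j, ω i j * f j := by
    simp only [weightedLaplacian, Pi.add_apply, Pi.neg_apply, Pi.smul_apply, smul_eq_mul,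
      mul_sub, sum_sub_distrib, ← sum_mul]
    ring
  have hsum : ‖∑ j, ω i j * f j‖ ≤ (∑ j, ω i j) * ‖f‖ := by
    rw [sum_mul]
    refine (norm_sum_le _ _).trans (sum_le_sum fun j _ => ?_)
    rw [norm_mul, norm_of_nonneg (hω i j)]
    exact mul_le_mul_of_nonneg_left (hf j) (hω i j)
  rw [hsplit]
  calc _ ≤ (c - a i * ∑ j, ω i j) * ‖f i‖ + a i * ‖∑ j, ω i j * f j‖ := by
        refine (norm_add_le _ _).trans_eq ?_
        rw [norm_mul, norm_mul, norm_of_nonneg (sub_nonneg.2 (hc i)), norm_of_nonneg (ha i)]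
    _ ≤ (c - a i * ∑ j, ω i j) * ‖f‖ + a i * ((∑ j, ω i j) * ‖f‖) := by
        gcongr
        · exact sub_nonneg.2 (hc i)
        · exact hf i
        · exact ha i
    _ = c * ‖f‖ := by ring

end WeightedLaplacian

theorem stmt_15_general {V : Type*} [Fintype V] [Nonempty V] [DecidableEq V]
    (ω : V → V → ℝ) (hnonneg : ∀ i j, 0 ≤ ω i j)
    (d : V → ℝ) (hd : ∀ i, d i = ∑ j, ω i j)
    (r : ℝ)
    (S : Finset V)
    (u : ℝ → V → ℝ) (hu0 : u 0 = chi S)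
    (hode : ∀ (t : ℝ) (i : V), HasDerivAt (fun s => u s i)
      (-(d i ^ (-r) * ∑ j, ω i j * (u t i - u t j))) t)
    (τ : ℝ) (hτ0 : 0 ≤ τ) :
    (univ.sup' univ_nonempty fun i => |u τ i - chi S i|)
      ≤ τ * (univ.sup' univ_nonempty fun i =>
          |d i ^ (-r) * ∑ j, ω i j * (chi S i - chi S j)|) ∧
    (τ ≤ 1 / (2 * (univ.sup' univ_nonempty fun i =>
          |d i ^ (-r) * ∑ j, ω i j * (chi S i - chi S j)|)) →
      (univ.sup' univ_nonempty fun i => |u τ i - chi S i|) ≤ 1/2) := by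
  set Δ := weightedLaplacian (fun i => d i ^ (-r)) ω
  have hu : ∀ t, HasDerivAt u (-Δ (u t)) t := fun t => hasDerivAt_pi.2 (hode t)
  have ha : ∀ i, 0 ≤ d i ^ (-r) := fun i =>
    Real.rpow_nonneg (hd i ▸ sum_nonneg fun j _ => hnonneg i j) _
  have hdeg : ∀ i, 0 ≤ d i ^ (-r) * ∑ j, ω i j := fun i =>
    mul_nonneg (ha i) (sum_nonneg fun j _ => hnonneg i j)
  have hc0 : 0 ≤ ∑ i, d i ^ (-r) * ∑ j, ω i j := sum_nonneg fun i _ => hdeg i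
  have hc : ∀ i, d i ^ (-r) * ∑ j, ω i j ≤ ∑ k, d k ^ (-r) * ∑ j, ω k j := fun i =>
    single_le_sum (fun k _ => hdeg k) (mem_univ i)
  have hcontract : ∀ t, 0 ≤ t → ‖Δ (u t)‖ ≤ ‖Δ (chi S)‖ := fun t ht => hu0 ▸
    norm_le_norm_zero_of_dissipative hc0
      (fun t => (hu t).weightedLaplacian.congr_deriv (weightedLaplacian_neg _))
      (fun t => norm_neg_weightedLaplacian_add_smul_le ha hnonneg hc0 hc _) ht
  have hmvt : ‖u τ - chi S‖ ≤ ‖Δ (chi S)‖ * τ := by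
    simpa [hu0] using norm_image_sub_le_of_norm_deriv_le_segment'
      (fun t _ => (hu t).hasDerivWithinAt) (fun t ht => (norm_neg _).trans_le (hcontract t ht.1))
      τ ⟨hτ0, le_rfl⟩
  have hdev : (univ.sup' univ_nonempty fun i => |u τ i - chi S i|) = ‖u τ - chi S‖ :=
    sup'_univ_abs_eq_norm _
  have hcurv : (univ.sup' univ_nonempty fun i =>
      |d i ^ (-r) * ∑ j, ω i j * (chi S i - chi S j)|) = ‖Δ (chi S)‖ :=
    sup'_univ_abs_eq_norm _
  rw [hdev, hcurv]
  refine ⟨by linarith, fun hτ => hmvt.trans ?_⟩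
  rcases (norm_nonneg (Δ (chi S))).eq_or_lt with h | h
  · simp [← h]
  · rw [le_div_iff₀ (by positivity)] at hτ
    linarith

/-- MBO pinning (curvature bound): the diffused indicator satisfies
`‖e^{-τΔ}χ_S - χ_S‖_{V,∞} ≤ τ ‖Δχ_S‖_{V,∞}`; in particular if
`τ ≤ 1/(2‖Δχ_S‖_{V,∞})` then `‖e^{-τΔ}χ_S - χ_S‖_{V,∞} ≤ 1/2`. -/
theorem stmt_15 {V : Type*} [Fintype V] [Nonempty V] [DecidableEq V]
    (ω : V → V → ℝ) (hsym : ∀ i j, ω i j = ω j i) (hnonneg : ∀ i j, 0 ≤ ω i j)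
    (d : V → ℝ) (hd : ∀ i, d i = ∑ j, ω i j) (hdpos : ∀ i, 0 < d i)
    (r : ℝ) (hr : r ∈ Set.Icc (0 : ℝ) 1)
    (S : Finset V)
    (u : ℝ → V → ℝ) (hu0 : u 0 = chi S)
    (hode : ∀ (t : ℝ) (i : V), HasDerivAt (fun s => u s i)
      (-(d i ^ (-r) * ∑ j, ω i j * (u t i - u t j))) t)
    (τ : ℝ) (hτ0 : 0 ≤ τ) :
    (univ.sup' univ_nonempty fun i => |u τ i - chi S i|)
      ≤ τ * (univ.sup' univ_nonempty fun i =>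
          |d i ^ (-r) * ∑ j, ω i j * (chi S i - chi S j)|) ∧
    (τ ≤ 1 / (2 * (univ.sup' univ_nonempty fun i =>
          |d i ^ (-r) * ∑ j, ω i j * (chi S i - chi S j)|)) →
      (univ.sup' univ_nonempty fun i => |u τ i - chi S i|) ≤ 1/2) :=
  stmt_15_general ω hnonneg d hd r S u hu0 hode τ hτ0
end

section
/- The MBO Lyapunov functional J(u) = ⟨1−u, e^{−τΔ}u⟩_V is strictly concave on ℝ^V and strictly decreases along non-stationary MBO iterates: if u_{k+1} = χ_{{e^{−τΔ}u_k ≥ 1/2}} and u_{k+1} ≠ u_k, then J(u_{k+1}) < J(u_k). Consequently, the graph MBO algorithm, starting from any binary initial condition, reaches a stationary state in finitely many iterations. -/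
/-!
Writing `w i = d i ^ r` and `B u v = ⟨u, K v⟩_V = ∑ i, w i * u i * (K v) i`, the functional is `J u = B (1 - u) u`, a linear function minus the
positive definite quadratic form `u ↦ B u u`; this gives strict concavity. Expanding `J` around `u`,
`J v = J u + B (v - u) (1 - 2 • u) - B (v - u) (v - u)`, and since `K 1 = 1` the middle term is
`∑ i, w i (v - u) i (1 - 2 (K u) i)`. The thresholding step makes every summand nonpositive, so
`J` strictly decreases whenever the step moves. Binary states are finitely many, so a strictly
decreasing Lyapunov function forces the iteration to stop.
-/

open Finset

namespace LinearMap.BilinForm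

variable {E : Type*} [AddCommGroup E] [Module ℝ E] (B : LinearMap.BilinForm ℝ E)

theorem apply_smul_add_smul_self {a b : ℝ} (hab : a + b = 1) (x y : E) :
    B (a • x + b • y) (a • x + b • y) = a * B x x + b * B y y - a * b * B (x - y) (x - y) := by
  simp only [map_add, map_sub, map_smul, LinearMap.add_apply, LinearMap.sub_apply,
    LinearMap.smul_apply, smul_eq_mul]
  obtain rfl : b = 1 - a := by linarith
  ring

theorem strictConvexOn_apply_self (hB : ∀ x ≠ 0, 0 < B x x) :
    StrictConvexOn ℝ Set.univ fun x => B x x := by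
  refine ⟨convex_univ, fun x _ y _ hxy a b ha hb hab => ?_⟩
  have := mul_pos (mul_pos ha hb) (hB (x - y) (sub_ne_zero.mpr hxy))
  simp only [smul_eq_mul, B.apply_smul_add_smul_self hab]
  linarith

theorem strictConcaveOn_apply_sub_self (hB : ∀ x ≠ 0, 0 < B x x) (e : E) :
    StrictConcaveOn ℝ Set.univ fun u => B (e - u) u := by
  simp only [map_sub, LinearMap.sub_apply]
  exact ((B e).concaveOn convex_univ).sub_strictConvexOn (B.strictConvexOn_apply_self hB)

theorem IsSymm.apply_sub_self_eq {B : LinearMap.BilinForm ℝ E} (hB : B.IsSymm) (e u v : E) :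
    B (e - v) v = B (e - u) u + B (v - u) (e - (2 : ℝ) • u) - B (v - u) (v - u) := by
  simp only [map_sub, map_smul, LinearMap.sub_apply, smul_eq_mul, hB.eq e, hB.eq v u]
  ring

end LinearMap.BilinForm

theorem exists_forall_ge_eq_of_lyapunov {α β : Type*} [Preorder β] {s : Set α} (hs : s.Finite)
    {T : α → α} (hT : Set.MapsTo T s s) (J : α → β) (hJ : ∀ x ∈ s, T x ≠ x → J (T x) < J x)
    {u : ℕ → α} (hu0 : u 0 ∈ s) (hu : ∀ k, u (k + 1) = T (u k)) :
    ∃ N, ∀ k, N ≤ k → u k = u N := by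
  have hmem : ∀ k, u k ∈ s := fun k => Nat.rec hu0 (fun k hk => hu k ▸ hT hk) k
  obtain ⟨N, hN⟩ : ∃ N, u (N + 1) = u N := by
    by_contra! hmove
    have hanti : StrictAnti (J ∘ u) := strictAnti_nat_of_succ_lt fun k => by
      simpa only [Function.comp_apply, hu k] using hJ _ (hmem k) (hu k ▸ hmove k)
    exact Set.infinite_of_injective_forall_mem hanti.injective.of_comp hmem hs
  refine ⟨N, fun k hk => ?_⟩
  induction k, hk using Nat.le_induction with
  | base => rfl
  | succ k _ ih => rw [hu k, ih, ← hu N, hN]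

section MBO

variable {V : Type*}

noncomputable def mboStep (K : (V → ℝ) →ₗ[ℝ] (V → ℝ)) (u : V → ℝ) : V → ℝ :=
  fun i => if (1 / 2 : ℝ) ≤ K u i then 1 else 0

theorem mboStep_sub_mul_nonpos {K : (V → ℝ) →ₗ[ℝ] (V → ℝ)} {u : V → ℝ} {i : V}
    (hu : u i ∈ Set.Icc 0 1) :
    (mboStep K u i - u i) * (1 - 2 * K u i) ≤ 0 := by
  obtain ⟨hu0, hu1⟩ := hu
  unfold mboStep
  split_ifs with h
  · exact mul_nonpos_of_nonneg_of_nonpos (by linarith) (by linarith)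
  · exact mul_nonpos_of_nonpos_of_nonneg (by linarith) (by linarith)

theorem mapsTo_mboStep_binary (K : (V → ℝ) →ₗ[ℝ] (V → ℝ)) :
    Set.MapsTo (mboStep K) {u | ∀ i, u i = 0 ∨ u i = 1} {u | ∀ i, u i = 0 ∨ u i = 1} :=
  fun u _ i => by unfold mboStep; split_ifs <;> simp

variable [Fintype V]

def weightedInner (w : V → ℝ) : LinearMap.BilinForm ℝ (V → ℝ) :=
  LinearMap.mk₂ ℝ (fun u v => ∑ i, w i * u i * v i)
    (fun _ _ _ => by simp only [Pi.add_apply, ← sum_add_distrib]; congr! 1; ring)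
    (fun _ _ _ => by simp only [Pi.smul_apply, smul_eq_mul, mul_sum]; congr! 1; ring)
    (fun _ _ _ => by simp only [Pi.add_apply, ← sum_add_distrib]; congr! 1; ring)
    (fun _ _ _ => by simp only [Pi.smul_apply, smul_eq_mul, mul_sum]; congr! 1; ring)

theorem weightedInner_apply (w u v : V → ℝ) : weightedInner w u v = ∑ i, w i * u i * v i := rfl

theorem weightedInner_comm (w u v : V → ℝ) : weightedInner w u v = weightedInner w v u := by
  simp only [weightedInner_apply, mul_right_comm]

theorem isSymm_weightedInner_compRight {w : V → ℝ} {K : (V → ℝ) →ₗ[ℝ] (V → ℝ)}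
    (hK : ∀ u v, weightedInner w (K u) v = weightedInner w u (K v)) :
    ((weightedInner w).compRight K).IsSymm :=
  ⟨fun u v => by rw [LinearMap.BilinForm.compRight_apply, LinearMap.BilinForm.compRight_apply,
    weightedInner_comm, hK]⟩

def mboEnergy (w : V → ℝ) (K : (V → ℝ) →ₗ[ℝ] (V → ℝ)) (u : V → ℝ) : ℝ :=
  ∑ i, w i * (1 - u i) * K u i

theorem mboEnergy_eq_compRight (w : V → ℝ) (K : (V → ℝ) →ₗ[ℝ] (V → ℝ)) (u : V → ℝ) :
    mboEnergy w K u = (weightedInner w).compRight K (1 - u) u := rfl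

variable {w : V → ℝ} {K : (V → ℝ) →ₗ[ℝ] (V → ℝ)}

theorem strictConcaveOn_mboEnergy (hKpos : ∀ v ≠ 0, 0 < weightedInner w (K v) v) :
    StrictConcaveOn ℝ Set.univ (mboEnergy w K) := by
  simp only [funext (mboEnergy_eq_compRight w K)]
  refine LinearMap.BilinForm.strictConcaveOn_apply_sub_self _ (fun v hv => ?_) 1
  rw [LinearMap.BilinForm.compRight_apply, weightedInner_comm]
  exact hKpos v hv

theorem mboEnergy_mboStep_lt (hw : ∀ i, 0 ≤ w i)
    (hKsymm : ∀ u v, weightedInner w (K u) v = weightedInner w u (K v))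
    (hKpos : ∀ v ≠ 0, 0 < weightedInner w (K v) v) (hK1 : K 1 = 1) {u : V → ℝ}
    (hu : ∀ i, u i ∈ Set.Icc 0 1) (hmove : mboStep K u ≠ u) :
    mboEnergy w K (mboStep K u) < mboEnergy w K u := by
  have hlin : (weightedInner w).compRight K (mboStep K u - u) (1 - (2 : ℝ) • u) ≤ 0 := by
    rw [LinearMap.BilinForm.compRight_apply, map_sub K, map_smul K, hK1, weightedInner_apply]
    refine Finset.sum_nonpos fun i _ => ?_
    simp only [Pi.sub_apply, Pi.smul_apply, Pi.one_apply, smul_eq_mul, mul_assoc]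
    exact mul_nonpos_of_nonneg_of_nonpos (hw i) (mboStep_sub_mul_nonpos (hu i))
  have hquad : 0 < (weightedInner w).compRight K (mboStep K u - u) (mboStep K u - u) := by
    rw [LinearMap.BilinForm.compRight_apply, weightedInner_comm]
    exact hKpos _ (sub_ne_zero.mpr hmove)
  rw [mboEnergy_eq_compRight, mboEnergy_eq_compRight,
    (isSymm_weightedInner_compRight hKsymm).apply_sub_self_eq 1 u]
  linarith

theorem finite_setOf_binary : {u : V → ℝ | ∀ i, u i = 0 ∨ u i = 1}.Finite :=
  Set.Finite.pi' fun _ => Set.toFinite {0, 1}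

end MBO

theorem stmt_18_general {V : Type*} [Fintype V]
    (d : V → ℝ) (hdpos : ∀ i, 0 < d i) (r : ℝ)
    (K : (V → ℝ) →ₗ[ℝ] (V → ℝ))
    (hsa : ∀ u v : V → ℝ, ∑ i, d i ^ r * (K u) i * v i = ∑ i, d i ^ r * u i * (K v) i)
    (hpd : ∀ v : V → ℝ, v ≠ 0 → 0 < ∑ i, d i ^ r * (K v) i * v i)
    (hK1 : K (fun _ => (1 : ℝ)) = fun _ => (1 : ℝ)) :
    StrictConcaveOn ℝ Set.univ
      (fun u : V → ℝ => ∑ i, d i ^ r * (1 - u i) * (K u) i) ∧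
    (∀ u : V → ℝ, (∀ i, u i = 0 ∨ u i = 1) →
      (fun i => if (1/2 : ℝ) ≤ K u i then (1 : ℝ) else 0) ≠ u →
      (∑ i, d i ^ r * (1 - (if (1/2 : ℝ) ≤ K u i then (1 : ℝ) else 0)) *
          (K (fun i => if (1/2 : ℝ) ≤ K u i then (1 : ℝ) else 0)) i)
        < ∑ i, d i ^ r * (1 - u i) * (K u) i) ∧
    (∀ useq : ℕ → V → ℝ, (∀ i, useq 0 i = 0 ∨ useq 0 i = 1) →
      (∀ k, useq (k+1) = fun i => if (1/2 : ℝ) ≤ K (useq k) i then (1 : ℝ) else 0) →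
      ∃ N, ∀ k, N ≤ k → useq k = useq N) := by
  have hw : ∀ i, 0 ≤ d i ^ r := fun i => Real.rpow_nonneg (hdpos i).le r
  have hdescent : ∀ u : V → ℝ, (∀ i, u i = 0 ∨ u i = 1) → mboStep K u ≠ u →
      mboEnergy (d · ^ r) K (mboStep K u) < mboEnergy (d · ^ r) K u := fun u hu =>
    mboEnergy_mboStep_lt hw hsa hpd hK1 fun i => by rcases hu i with h | h <;> simp [h]
  exact ⟨strictConcaveOn_mboEnergy hpd, hdescent, fun _ h0 hstep =>
    exists_forall_ge_eq_of_lyapunov finite_setOf_binary (mapsTo_mboStep_binary K) _ hdescent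
      h0 hstep⟩

/-- The MBO Lyapunov functional `J(u) = ⟨1-u, e^{-τΔ}u⟩_V`, for the self-adjoint,
positive-definite, mass-preserving heat semigroup `K = e^{-τΔ}`, is strictly
concave, strictly decreases along non-stationary MBO iterates, and consequently
the MBO iteration starting from any binary state is stationary after finitely
many steps. -/
theorem stmt_18 {V : Type*} [Fintype V]
    (d : V → ℝ) (hdpos : ∀ i, 0 < d i) (r : ℝ) (hr : r ∈ Set.Icc (0 : ℝ) 1)
    (τ : ℝ) (hτ : 0 < τ)
    (K : (V → ℝ) →ₗ[ℝ] (V → ℝ))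
    (hsa : ∀ u v : V → ℝ, ∑ i, d i ^ r * (K u) i * v i = ∑ i, d i ^ r * u i * (K v) i)
    (hpd : ∀ v : V → ℝ, v ≠ 0 → 0 < ∑ i, d i ^ r * (K v) i * v i)
    (hK1 : K (fun _ => (1 : ℝ)) = fun _ => (1 : ℝ)) :
    StrictConcaveOn ℝ Set.univ
      (fun u : V → ℝ => ∑ i, d i ^ r * (1 - u i) * (K u) i) ∧
    (∀ u : V → ℝ, (∀ i, u i = 0 ∨ u i = 1) →
      (fun i => if (1/2 : ℝ) ≤ K u i then (1 : ℝ) else 0) ≠ u →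
      (∑ i, d i ^ r * (1 - (if (1/2 : ℝ) ≤ K u i then (1 : ℝ) else 0)) *
          (K (fun i => if (1/2 : ℝ) ≤ K u i then (1 : ℝ) else 0)) i)
        < ∑ i, d i ^ r * (1 - u i) * (K u) i) ∧
    (∀ useq : ℕ → V → ℝ, (∀ i, useq 0 i = 0 ∨ useq 0 i = 1) →
      (∀ k, useq (k+1) = fun i => if (1/2 : ℝ) ≤ K (useq k) i then (1 : ℝ) else 0) →
      ∃ N, ∀ k, N ≤ k → useq k = useq N) :=
  stmt_18_general d hdpos r K hsa hpd hK1
end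

section
/- Invariant region for the graph Allen-Cahn equation: for the flow u̇_i = −(Δu)_i − (1/ε) d_i^{−r} W′(u_i) with W(u) = (u+1)²(u−1)², the set S = {u : ‖u‖_V² ≤ (17/4) n d₊^r} is positively invariant, t ↦ ‖u(t)‖_V² is strictly decreasing whenever u(t) ∉ S, and every trajectory enters S in finite time. -/
/-!
Along the flow, `d/dt ‖u‖_V² = -2 ∑ᵢ uᵢ ∑ⱼ ωᵢⱼ (uᵢ - uⱼ) - (8/ε) ∑ᵢ uᵢ² (uᵢ² - 1)`, the weights `dᵢʳ`
cancelling the `dᵢ⁻ʳ` of the equation. The diffusion term is `-∑ ωᵢⱼ (uᵢ - uⱼ)² ≤ 0`. If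
`‖u‖_V² ≥ (17/4) n d₊ʳ`, then `∑ uᵢ² ≥ (17/4) n`, and Cauchy–Schwarz `(∑ uᵢ²)² ≤ n ∑ uᵢ⁴` gives
`∑ uᵢ² (uᵢ² - 1) ≥ (17/4)(13/4) n`. So on and outside the boundary of `S` the norm decreases at a
uniform rate `221 n / (2ε)`: it cannot cross the boundary outwards, and from outside it reaches
`S` in time at most `(‖u(0)‖_V² - (17/4) n d₊ʳ) · 2ε / (221 n)`.
-/

open Finset

theorem le_of_hasDerivAt_neg_of_eq {f f' : ℝ → ℝ} {c : ℝ} (hf : ∀ t, HasDerivAt f (f' t) t)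
    (hneg : ∀ t, f t = c → f' t < 0) {t₀ t : ℝ} (ht : t₀ ≤ t) (h₀ : f t₀ ≤ c) : f t ≤ c :=
  image_le_of_deriv_right_lt_deriv_boundary' (B := fun _ => c) (B' := 0)
    (fun x _ => (hf x).continuousAt.continuousWithinAt) (fun x _ => (hf x).hasDerivWithinAt)
    h₀ continuousOn_const (fun _ _ => hasDerivWithinAt_const _ _ _) (fun x _ hx => hneg x hx)
    ⟨ht, le_rfl⟩

theorem exists_le_of_hasDerivAt_le_neg {f f' : ℝ → ℝ} {c δ : ℝ} (hf : ∀ t, HasDerivAt f (f' t) t)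
    (hδ : 0 < δ) (hbound : ∀ t, c < f t → f' t ≤ -δ) (t₀ : ℝ) : ∃ T, t₀ ≤ T ∧ f T ≤ c := by
  by_contra! hgt
  set T := t₀ + (f t₀ - c) / δ
  have hT : t₀ ≤ T := le_add_of_nonneg_right (div_nonneg (sub_nonneg.2 (hgt t₀ le_rfl).le) hδ.le)
  have hdecay : f T - f t₀ ≤ -δ * (T - t₀) := by
    refine (convex_Ici t₀).image_sub_le_mul_sub_of_deriv_le
      (fun x _ => (hf x).continuousAt.continuousWithinAt)
      (fun x _ => (hf x).differentiableAt.differentiableWithinAt) (fun x hx => ?_)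
      t₀ Set.self_mem_Ici T hT hT
    rw [interior_Ici] at hx
    exact (hf x).deriv ▸ hbound x (hgt x hx.le)
  have : δ * (T - t₀) = f t₀ - c := by simp only [T]; field_simp; ring
  linarith [hgt T hT]

section

variable {V : Type*} [Fintype V]

theorem two_mul_sum_mul_sum_sub_eq (ω : V → V → ℝ) (hsym : ∀ i j, ω i j = ω j i) (v : V → ℝ) :
    2 * ∑ i, v i * ∑ j, ω i j * (v i - v j) = ∑ i, ∑ j, ω i j * (v i - v j) ^ 2 := by
  have hexpand : ∑ i, v i * ∑ j, ω i j * (v i - v j) = ∑ i, ∑ j, ω i j * (v i * (v i - v j)) :=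
    sum_congr rfl fun i _ => by rw [mul_sum]; exact sum_congr rfl fun j _ => by ring
  have hswap : ∑ i, ∑ j, ω i j * (v i * (v i - v j)) = ∑ i, ∑ j, ω i j * (v j * (v j - v i)) := by
    rw [sum_comm]
    exact sum_congr rfl fun i _ => sum_congr rfl fun j _ => by rw [hsym]
  rw [hexpand, two_mul]
  nth_rewrite 2 [hswap]
  rw [← sum_add_distrib]
  exact sum_congr rfl fun i _ => by rw [← sum_add_distrib]; exact sum_congr rfl fun j _ => by ring

theorem sum_mul_sum_sub_nonneg (ω : V → V → ℝ) (hsym : ∀ i j, ω i j = ω j i)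
    (hnonneg : ∀ i j, 0 ≤ ω i j) (v : V → ℝ) :
    0 ≤ ∑ i, v i * ∑ j, ω i j * (v i - v j) := by
  have hsq : 0 ≤ ∑ i, ∑ j, ω i j * (v i - v j) ^ 2 :=
    sum_nonneg fun i _ => sum_nonneg fun j _ => mul_nonneg (hnonneg i j) (sq_nonneg _)
  linarith [two_mul_sum_mul_sum_sub_eq ω hsym v]

theorem card_mul_le_sum_sq_mul_sq_sub_one {a : ℝ} (ha : 1 / 2 ≤ a) (v : V → ℝ)
    (h : a * (Fintype.card V : ℝ) ≤ ∑ i, v i ^ 2) :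
    (Fintype.card V : ℝ) * (a * (a - 1)) ≤ ∑ i, v i ^ 2 * (v i ^ 2 - 1) := by
  rcases isEmpty_or_nonempty V with hV | hV
  · simp
  set n : ℝ := (Fintype.card V : ℝ)
  set S := ∑ i, v i ^ 2
  have hn : 0 < n := by positivity
  have hCS : S ^ 2 ≤ n * ∑ i, (v i ^ 2) ^ 2 := sq_sum_le_card_mul_sum_sq
  have hsum : ∑ i, v i ^ 2 * (v i ^ 2 - 1) = ∑ i, (v i ^ 2) ^ 2 - S := by
    rw [← sum_sub_distrib]
    exact sum_congr rfl fun i _ => by ring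
  rw [hsum]
  -- `S (S - n) - a n (a n - n) = (S - a n) (S + a n - n) ≥ 0` since `2 a ≥ 1`
  have key : n * (n * (a * (a - 1))) ≤ n * (∑ i, (v i ^ 2) ^ 2 - S) := by
    nlinarith [mul_nonneg (sub_nonneg.2 h) (show 0 ≤ S + a * n - n by nlinarith)]
  exact le_of_mul_le_mul_left key hn

noncomputable def allenCahnNormSqDeriv (ω : V → V → ℝ) (ε : ℝ) (v : V → ℝ) : ℝ :=
  -2 * ∑ i, v i * ∑ j, ω i j * (v i - v j) - 8 / ε * ∑ i, v i ^ 2 * (v i ^ 2 - 1)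

theorem hasDerivAt_sum_rpow_mul_sq_allenCahn {ω : V → V → ℝ} {d : V → ℝ} {r ε : ℝ}
    {u : ℝ → V → ℝ} (hdpos : ∀ i, 0 < d i)
    (hode : ∀ (t : ℝ) (i : V), HasDerivAt (fun s => u s i)
      (-(d i ^ (-r) * ∑ j, ω i j * (u t i - u t j))
        - (1/ε) * d i ^ (-r) * (4 * u t i * ((u t i) ^ 2 - 1))) t) (t : ℝ) :
    HasDerivAt (fun s => ∑ i, d i ^ r * (u s i) ^ 2) (allenCahnNormSqDeriv ω ε (u t)) t := by
  refine (HasDerivAt.fun_sum (u := univ) fun i _ =>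
    ((hode t i).fun_pow 2).const_mul (d i ^ r)).congr_deriv ?_
  rw [allenCahnNormSqDeriv, mul_sum, mul_sum, ← sum_sub_distrib]
  refine sum_congr rfl fun i _ => ?_
  have hcancel : d i ^ r * d i ^ (-r) = 1 := by
    rw [← Real.rpow_add (hdpos i), add_neg_cancel, Real.rpow_zero]
  linear_combination (-2 * (u t i * ∑ j, ω i j * (u t i - u t j))
    - 8 / ε * (u t i ^ 2 * (u t i ^ 2 - 1))) * hcancel

theorem allenCahnNormSqDeriv_le {ω : V → V → ℝ} (hsym : ∀ i j, ω i j = ω j i)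
    (hnonneg : ∀ i j, 0 ≤ ω i j) {ε : ℝ} (hε : 0 < ε) {w : V → ℝ} {M : ℝ} (hM : 0 < M)
    (hw : ∀ i, w i ≤ M) {v : V → ℝ}
    (hv : 17 / 4 * (Fintype.card V : ℝ) * M ≤ ∑ i, w i * v i ^ 2) :
    allenCahnNormSqDeriv ω ε v ≤ -(221 * Fintype.card V / (2 * ε)) := by
  have hweighted : ∑ i, w i * v i ^ 2 ≤ M * ∑ i, v i ^ 2 := by
    rw [mul_sum]
    exact sum_le_sum fun i _ => mul_le_mul_of_nonneg_right (hw i) (sq_nonneg _)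
  have hmass : 17 / 4 * (Fintype.card V : ℝ) ≤ ∑ i, v i ^ 2 :=
    le_of_mul_le_mul_left (by linarith) hM
  have hpot := card_mul_le_sum_sq_mul_sq_sub_one (by norm_num) v hmass
  have hdir := sum_mul_sum_sub_nonneg ω hsym hnonneg v
  have hpot' := mul_le_mul_of_nonneg_left hpot (show 0 ≤ 8 / ε by positivity)
  unfold allenCahnNormSqDeriv
  have hrate : 8 / ε * ((Fintype.card V : ℝ) * (17 / 4 * (17 / 4 - 1)))
      = 221 * Fintype.card V / (2 * ε) := by
    field_simp; ring
  linarith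

end

theorem stmt_19_general {V : Type*} [Fintype V] [Nonempty V]
    (ω : V → V → ℝ) (hsym : ∀ i j, ω i j = ω j i) (hnonneg : ∀ i j, 0 ≤ ω i j)
    (d : V → ℝ) (hdpos : ∀ i, 0 < d i)
    (r : ℝ) (hr : r ∈ Set.Icc (0 : ℝ) 1)
    (ε : ℝ) (hε : 0 < ε)
    (u : ℝ → V → ℝ)
    (hode : ∀ (t : ℝ) (i : V), HasDerivAt (fun s => u s i)
      (-(d i ^ (-r) * ∑ j, ω i j * (u t i - u t j))
        - (1/ε) * d i ^ (-r) * (4 * u t i * ((u t i) ^ 2 - 1))) t) :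
    (∀ t : ℝ,
      (17/4) * (Fintype.card V : ℝ) * (univ.sup' univ_nonempty d) ^ r
          < ∑ i, d i ^ r * (u t i) ^ 2 →
      ∀ D : ℝ, HasDerivAt (fun s => ∑ i, d i ^ r * (u s i) ^ 2) D t → D < 0) ∧
    (∀ t₀ t : ℝ, t₀ ≤ t →
      ∑ i, d i ^ r * (u t₀ i) ^ 2
        ≤ (17/4) * (Fintype.card V : ℝ) * (univ.sup' univ_nonempty d) ^ r →
      ∑ i, d i ^ r * (u t i) ^ 2
        ≤ (17/4) * (Fintype.card V : ℝ) * (univ.sup' univ_nonempty d) ^ r) ∧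
    (∃ T : ℝ, 0 ≤ T ∧
      ∑ i, d i ^ r * (u T i) ^ 2
        ≤ (17/4) * (Fintype.card V : ℝ) * (univ.sup' univ_nonempty d) ^ r) := by
  have hE := hasDerivAt_sum_rpow_mul_sq_allenCahn hdpos hode
  have hle_max (i : V) : d i ≤ univ.sup' univ_nonempty d := le_sup' d (mem_univ i)
  have hdecay (t : ℝ)
      (ht : 17/4 * (Fintype.card V : ℝ) * (univ.sup' univ_nonempty d) ^ r
        ≤ ∑ i, d i ^ r * (u t i) ^ 2) :
      allenCahnNormSqDeriv ω ε (u t) ≤ -(221 * Fintype.card V / (2 * ε)) :=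
    allenCahnNormSqDeriv_le hsym hnonneg hε
      (Real.rpow_pos_of_pos ((hdpos _).trans_le (hle_max (Classical.arbitrary V))) r)
      (fun i => Real.rpow_le_rpow (hdpos i).le (hle_max i) hr.1) ht
  have hδ : 0 < 221 * (Fintype.card V : ℝ) / (2 * ε) := by positivity
  refine ⟨fun t ht D hD => ?_, fun t₀ t ht h₀ => ?_, ?_⟩
  · linarith [(hE t).unique hD, hdecay t ht.le]
  · exact le_of_hasDerivAt_neg_of_eq hE (fun s hs => by linarith [hdecay s hs.ge]) ht h₀
  · exact exists_le_of_hasDerivAt_le_neg hE hδ (fun t ht => hdecay t ht.le) 0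

/-- Invariant region for the graph Allen–Cahn equation
`u̇_i = -(Δu)_i - (1/ε) d_i^{-r} W'(u_i)` with `W'(u) = 4u(u²-1)`:
the set `S = {u : ‖u‖_V² ≤ (17/4) n d₊^r}` is positively invariant,
`t ↦ ‖u(t)‖_V²` is decreasing whenever `u(t) ∉ S`, and every trajectory enters
`S` in finite time. -/
theorem stmt_19 {V : Type*} [Fintype V] [Nonempty V]
    (ω : V → V → ℝ) (hsym : ∀ i j, ω i j = ω j i) (hnonneg : ∀ i j, 0 ≤ ω i j)
    (d : V → ℝ) (hd : ∀ i, d i = ∑ j, ω i j) (hdpos : ∀ i, 0 < d i)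
    (r : ℝ) (hr : r ∈ Set.Icc (0 : ℝ) 1)
    (ε : ℝ) (hε : 0 < ε)
    (u : ℝ → V → ℝ)
    (hode : ∀ (t : ℝ) (i : V), HasDerivAt (fun s => u s i)
      (-(d i ^ (-r) * ∑ j, ω i j * (u t i - u t j))
        - (1/ε) * d i ^ (-r) * (4 * u t i * ((u t i) ^ 2 - 1))) t) :
    (∀ t : ℝ,
      (17/4) * (Fintype.card V : ℝ) * (univ.sup' univ_nonempty d) ^ r
          < ∑ i, d i ^ r * (u t i) ^ 2 →
      ∀ D : ℝ, HasDerivAt (fun s => ∑ i, d i ^ r * (u s i) ^ 2) D t → D < 0) ∧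
    (∀ t₀ t : ℝ, t₀ ≤ t →
      ∑ i, d i ^ r * (u t₀ i) ^ 2
        ≤ (17/4) * (Fintype.card V : ℝ) * (univ.sup' univ_nonempty d) ^ r →
      ∑ i, d i ^ r * (u t i) ^ 2
        ≤ (17/4) * (Fintype.card V : ℝ) * (univ.sup' univ_nonempty d) ^ r) ∧
    (∃ T : ℝ, 0 ≤ T ∧
      ∑ i, d i ^ r * (u T i) ^ 2
        ≤ (17/4) * (Fintype.card V : ℝ) * (univ.sup' univ_nonempty d) ^ r) :=
  stmt_19_general ω hsym hnonneg d hdpos r hr ε hε u hode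
end
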